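/- Let f : ℝ → ℂ be defined by f(x) = |x|^{-1/2} e^{i/x} for x ≠ 0 and f(0) = 0. Then f is locally integrable on ℝ, f is unbounded on every neighborhood of 0, and f has the Łojasiewicz value 0 at 0: for every test function φ on ℝ, ∫_ℝ f(ε x) φ(x) dx → 0 as ε → 0 through nonzero reals. -/

import Mathlib

open MeasureTheory Filter Metric Topology Set

noncomputable section

def gfun (x : ℝ) : ℂ :=
  ((|x| ^ (-(1 : ℝ) / 2) : ℝ) : ℂ) * Complex.exp (Complex.I / (x : ℂ))

lemma gfun_zero : gfun 0 = 0 := by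
  simp [gfun, Real.zero_rpow (by norm_num : (-(1:ℝ)/2) ≠ 0)]

lemma gfun_contAt {x : ℝ} (hx : x ≠ 0) : ContinuousAt gfun x := by
  apply ContinuousAt.mul
  · exact Complex.continuous_ofReal.continuousAt.comp
      ((Real.continuousAt_rpow_const _ _ (Or.inl (abs_ne_zero.2 hx))).comp
        continuous_abs.continuousAt)
  · exact Complex.continuous_exp.continuousAt.comp
      ((continuousAt_const.div (Complex.continuous_ofReal.continuousAt)
        (by exact_mod_cast hx)))

lemma gfun_meas : Measurable gfun := by
  apply measurable_of_continuousOn_compl_singleton (0 : ℝ)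
  intro x hx
  exact (gfun_contAt (by simpa using hx)).continuousWithinAt

lemma norm_exp_I_div (x : ℝ) : ‖Complex.exp (Complex.I / (x : ℂ))‖ = 1 := by
  have h : (Complex.I / (x : ℂ)).re = 0 := by
    simp [Complex.div_re]
  rw [Complex.norm_exp, h, Real.exp_zero]

lemma norm_gfun (x : ℝ) : ‖gfun x‖ = |x| ^ (-(1 : ℝ) / 2) := by
  rw [gfun, norm_mul, norm_exp_I_div x, mul_one, Complex.norm_real,
    Real.norm_eq_abs, abs_of_nonneg (Real.rpow_nonneg (abs_nonneg x) _)]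

lemma m_ii (a b : ℝ) : IntervalIntegrable (fun x => |x| ^ (-(1 : ℝ) / 2)) volume a b := by
  have h0 : ∀ c : ℝ, 0 ≤ c →
      IntervalIntegrable (fun x => |x| ^ (-(1 : ℝ) / 2)) volume 0 c := by
    intro c hc
    rw [intervalIntegrable_iff, uIoc_of_le hc]
    have h := intervalIntegral.intervalIntegrable_rpow' (a := 0) (b := c)
      (by norm_num : (-1 : ℝ) < -(1 : ℝ) / 2)
    rw [intervalIntegrable_iff, uIoc_of_le hc] at h
    exact h.congr_fun (fun x hx => by rw [abs_of_pos hx.1]) measurableSet_Ioc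
  have hall : ∀ c : ℝ, IntervalIntegrable (fun x => |x| ^ (-(1 : ℝ) / 2)) volume 0 c := by
    intro c
    rcases le_total 0 c with hc | hc
    · exact h0 c hc
    · rw [IntervalIntegrable.iff_comp_neg]
      simpa using h0 (-c) (by linarith)
  exact (hall a).symm.trans (hall b)

lemma gfun_ii (a b : ℝ) : IntervalIntegrable gfun volume a b := by
  rw [intervalIntegrable_iff]
  have hm := (m_ii a b)
  rw [intervalIntegrable_iff] at hm
  exact hm.mono' gfun_meas.aestronglyMeasurable.restrict
    (Filter.Eventually.of_forall fun x => (norm_gfun x).le)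

lemma gfun_loc : LocallyIntegrable gfun volume := by
  rw [locallyIntegrable_iff]
  intro K hK
  obtain ⟨R, hR⟩ := hK.isBounded.subset_closedBall 0
  have hR' : K ⊆ Icc (-|R|) |R| := by
    refine hR.trans ?_
    rw [Real.closedBall_eq_Icc]
    exact Icc_subset_Icc (by simp; linarith [le_abs_self R]) (by simpa using le_abs_self R)
  have : IntegrableOn gfun (Icc (-|R|) |R|) volume := by
    have h := gfun_ii (-|R|) |R|
    rwa [intervalIntegrable_iff_integrableOn_Icc_of_le
      (by linarith [abs_nonneg R])] at h
  exact this.mono hR' le_rfl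

def Ffun (x : ℝ) : ℂ := ∫ t in (0:ℝ)..x, gfun t

lemma Ffun_cont : Continuous Ffun :=
  intervalIntegral.continuous_primitive (fun a b => gfun_ii a b) 0

lemma Ffun_zero : Ffun 0 = 0 := by simp [Ffun]

lemma Ffun_deriv {y : ℝ} (hy : y ≠ 0) : HasDerivAt Ffun (gfun y) y :=
  intervalIntegral.integral_hasDerivAt_right (gfun_ii 0 y)
    ⟨univ, univ_mem, gfun_meas.aestronglyMeasurable.restrict⟩ (gfun_contAt hy)

def Efun (t : ℝ) : ℂ := Complex.exp (Complex.I / (t : ℂ))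

lemma norm_Efun (t : ℝ) : ‖Efun t‖ = 1 := norm_exp_I_div t

def Gfun (t : ℝ) : ℂ := Complex.I * ((t ^ ((3 : ℝ) / 2) : ℝ) : ℂ) * Efun t

lemma Efun_deriv {t : ℝ} (ht : t ≠ 0) :
    HasDerivAt Efun (Efun t * ((-(t ^ 2)⁻¹ : ℝ) * Complex.I)) t := by
  have hinner : HasDerivAt (fun s : ℝ => ((s⁻¹ : ℝ) : ℂ) * Complex.I)
      (((-(t ^ 2)⁻¹ : ℝ) : ℂ) * Complex.I) t :=
    ((hasDerivAt_inv ht).ofReal_comp).mul_const Complex.I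
  have heq : (fun s : ℝ => Complex.exp (((s⁻¹ : ℝ) : ℂ) * Complex.I)) = Efun := by
    funext s
    simp only [Efun, Complex.ofReal_inv]
    rw [div_eq_mul_inv, mul_comm]
  have := hinner.cexp
  rw [heq] at this
  convert this using 2
  simp only [Efun, Complex.ofReal_inv]
  rw [div_eq_mul_inv, mul_comm]

lemma Gfun_deriv {t : ℝ} (ht : 0 < t) :
    HasDerivAt Gfun
      (gfun t + Complex.I * ((((3 : ℝ) / 2) * t ^ ((1 : ℝ) / 2) : ℝ) : ℂ) * Efun t) t := by
  have h1 : HasDerivAt (fun s : ℝ => ((s ^ ((3 : ℝ) / 2) : ℝ) : ℂ))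
      ((((3 : ℝ) / 2) * t ^ ((3 : ℝ) / 2 - 1) : ℝ) : ℂ) t :=
    (Real.hasDerivAt_rpow_const (p := (3 : ℝ) / 2) (Or.inl ht.ne')).ofReal_comp
  have h2 := Efun_deriv ht.ne'
  have h3 := (h1.const_mul Complex.I).mul h2
  convert h3 using 1
  · rfl
  · rfl
  have hexp : (3 : ℝ) / 2 - 1 = 1 / 2 := by norm_num
  have hr : t ^ ((3 : ℝ) / 2) * (-(t ^ 2)⁻¹) = -(t ^ (-(1 : ℝ) / 2)) := by
    rw [mul_neg, neg_inj, ← Real.rpow_natCast t 2, ← Real.rpow_neg ht.le,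
      ← Real.rpow_add ht]
    norm_num
  have habs : |t| = t := abs_of_pos ht
  simp only [gfun, Efun, habs, hexp]
  have hprod : ((t ^ ((3 : ℝ) / 2) : ℝ) : ℂ) * ((-(t ^ 2)⁻¹ : ℝ) : ℂ)
      = -((t ^ (-(1 : ℝ) / 2) : ℝ) : ℂ) := by
    rw [← Complex.ofReal_mul, hr]; simp
  linear_combination Complex.exp (Complex.I / (t : ℂ)) * hprod +
    (-(((t ^ ((3 : ℝ) / 2) : ℝ) : ℂ) * ((-(t ^ 2)⁻¹ : ℝ) : ℂ) *
      Complex.exp (Complex.I / (t : ℂ)))) * Complex.I_sq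

lemma Efun_contAt {t : ℝ} (ht : t ≠ 0) : ContinuousAt Efun t :=
  Complex.continuous_exp.continuousAt.comp
    (continuousAt_const.div (Complex.continuous_ofReal.continuousAt) (by exact_mod_cast ht))

lemma cfun_contAt {t : ℝ} (ht : t ≠ 0) :
    ContinuousAt (fun t : ℝ =>
      Complex.I * ((((3 : ℝ) / 2) * t ^ ((1 : ℝ) / 2) : ℝ) : ℂ) * Efun t) t := by
  refine ContinuousAt.mul (continuousAt_const.mul ?_) (Efun_contAt ht)
  exact Complex.continuous_ofReal.continuousAt.comp
    (continuousAt_const.mul (Real.continuousAt_rpow_const _ _ (Or.inl ht)))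

lemma norm_cfun {t : ℝ} (ht : 0 ≤ t) :
    ‖Complex.I * ((((3 : ℝ) / 2) * t ^ ((1 : ℝ) / 2) : ℝ) : ℂ) * Efun t‖
      = 3 / 2 * t ^ ((1 : ℝ) / 2) := by
  rw [norm_mul, norm_mul, Complex.norm_I, norm_Efun, one_mul, mul_one, Complex.norm_real,
    Real.norm_eq_abs, abs_of_nonneg (by positivity)]

lemma norm_Gfun {t : ℝ} (ht : 0 ≤ t) : ‖Gfun t‖ = t ^ ((3 : ℝ) / 2) := by
  rw [Gfun, norm_mul, norm_mul, Complex.norm_I, norm_Efun, one_mul, mul_one, Complex.norm_real,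
    Real.norm_eq_abs, abs_of_nonneg (by positivity)]

lemma Ffun_small {δ : ℝ} (hδ : 0 ≤ δ) : ‖Ffun δ‖ ≤ 2 * δ ^ ((1 : ℝ) / 2) := by
  have h1 : ‖Ffun δ‖ ≤ |∫ t in (0 : ℝ)..δ, |t| ^ (-(1 : ℝ) / 2)| :=
    intervalIntegral.norm_integral_le_abs_of_norm_le
      (Eventually.of_forall fun t => (norm_gfun t).le) (m_ii 0 δ)
  have h2 : ∫ t in (0 : ℝ)..δ, |t| ^ (-(1 : ℝ) / 2) = ∫ t in (0 : ℝ)..δ, t ^ (-(1 : ℝ) / 2) := by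
    apply intervalIntegral.integral_congr
    intro t ht
    rw [uIcc_of_le hδ] at ht
    simp only []
    rw [abs_of_nonneg ht.1]
  have h3 : ∫ t in (0 : ℝ)..δ, t ^ (-(1 : ℝ) / 2) = 2 * δ ^ ((1 : ℝ) / 2) := by
    rw [integral_rpow (Or.inl (by norm_num))]
    rw [Real.zero_rpow (by norm_num : (-(1:ℝ)/2 + 1) ≠ 0)]
    ring
  rw [h2, h3] at h1
  refine h1.trans (le_of_eq (abs_of_nonneg (by positivity)))

lemma Ffun_bound_pos {x : ℝ} (hx : 0 < x) : ‖Ffun x‖ ≤ 3 * x ^ ((3 : ℝ) / 2) := by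
  set c : ℝ → ℂ := fun t =>
    Complex.I * ((((3 : ℝ) / 2) * t ^ ((1 : ℝ) / 2) : ℝ) : ℂ) * Efun t with hc
  have hev : ∀ᶠ δ in 𝓝[>] (0 : ℝ),
      ‖Ffun x‖ ≤ 2 * δ ^ ((1 : ℝ) / 2) + δ ^ ((3 : ℝ) / 2) + (5 / 2) * x ^ ((3 : ℝ) / 2) := by
    filter_upwards [Ioo_mem_nhdsGT_of_mem (Set.mem_Ico.mpr ⟨le_refl 0, hx⟩)] with δ hδIoo
    obtain ⟨hδ0, hδx⟩ := hδIoo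
    have huIcc : uIcc δ x = Icc δ x := uIcc_of_le hδx.le
    have hpos : ∀ t ∈ uIcc δ x, 0 < t := by
      intro t ht; rw [huIcc] at ht; exact lt_of_lt_of_le hδ0 ht.1
    have hcCont : ContinuousOn c (uIcc δ x) := fun t ht =>
      (cfun_contAt (hpos t ht).ne').continuousWithinAt
    have hcII : IntervalIntegrable c volume δ x := hcCont.intervalIntegrable
    have hDCont : ContinuousOn (fun t => gfun t + c t) (uIcc δ x) := fun t ht =>
      ((gfun_contAt (hpos t ht).ne').continuousWithinAt).add (hcCont t ht)
    have hIBP : ∫ t in δ..x, (gfun t + c t) = Gfun x - Gfun δ :=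
      intervalIntegral.integral_eq_sub_of_hasDerivAt
        (fun t ht => Gfun_deriv (hpos t ht)) hDCont.intervalIntegrable
    rw [intervalIntegral.integral_add (gfun_ii δ x) hcII] at hIBP
    have hInt : ∫ t in δ..x, gfun t = Gfun x - Gfun δ - ∫ t in δ..x, c t := by
      rw [← hIBP]; ring
    have hsplit : Ffun x = Ffun δ + ∫ t in δ..x, gfun t := by
      rw [Ffun, Ffun,
        intervalIntegral.integral_add_adjacent_intervals (gfun_ii 0 δ) (gfun_ii δ x)]
    have hcbound : ‖∫ t in δ..x, c t‖ ≤ (3 / 2 * x ^ ((1 : ℝ) / 2)) * |x - δ| := by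
      apply intervalIntegral.norm_integral_le_of_norm_le_const
      intro t ht
      rw [uIoc_of_le hδx.le] at ht
      rw [hc, norm_cfun (le_of_lt (lt_trans hδ0 ht.1))]
      exact mul_le_mul_of_nonneg_left
        (Real.rpow_le_rpow (le_of_lt (lt_trans hδ0 ht.1)) ht.2 (by norm_num)) (by norm_num)
    have hxd : (3 / 2 * x ^ ((1 : ℝ) / 2)) * |x - δ| ≤ 3 / 2 * x ^ ((3 : ℝ) / 2) := by
      rw [abs_of_nonneg (by linarith)]
      have Hx : x ^ ((1 : ℝ) / 2) * x = x ^ ((3 : ℝ) / 2) := by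
        nth_rewrite 2 [← Real.rpow_one x]
        rw [← Real.rpow_add hx]; norm_num
      calc (3 / 2 * x ^ ((1 : ℝ) / 2)) * (x - δ)
          ≤ (3 / 2 * x ^ ((1 : ℝ) / 2)) * x := by
            apply mul_le_mul_of_nonneg_left (by linarith) (by positivity)
        _ = 3 / 2 * x ^ ((3 : ℝ) / 2) := by rw [mul_assoc, Hx]
    calc ‖Ffun x‖ ≤ ‖Ffun δ‖ + ‖∫ t in δ..x, gfun t‖ := hsplit ▸ norm_add_le _ _
      _ ≤ 2 * δ ^ ((1 : ℝ) / 2) +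
          (‖Gfun x‖ + ‖Gfun δ‖ + ‖∫ t in δ..x, c t‖) := by
          refine add_le_add (Ffun_small hδ0.le) ?_
          rw [hInt]
          refine (norm_sub_le _ _).trans (add_le_add ((norm_sub_le _ _)) le_rfl)
      _ ≤ 2 * δ ^ ((1 : ℝ) / 2) + (x ^ ((3 : ℝ) / 2) + δ ^ ((3 : ℝ) / 2)
            + 3 / 2 * x ^ ((3 : ℝ) / 2)) := by
          refine add_le_add le_rfl (add_le_add (add_le_add ?_ ?_) (hcbound.trans hxd))
          · exact le_of_eq (norm_Gfun hx.le)
          · exact le_of_eq (norm_Gfun hδ0.le)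
      _ = 2 * δ ^ ((1 : ℝ) / 2) + δ ^ ((3 : ℝ) / 2) + (5 / 2) * x ^ ((3 : ℝ) / 2) := by ring
  have htend : Tendsto (fun δ : ℝ =>
      2 * δ ^ ((1 : ℝ) / 2) + δ ^ ((3 : ℝ) / 2) + (5 / 2) * x ^ ((3 : ℝ) / 2))
      (𝓝[>] (0 : ℝ)) (𝓝 (2 * (0:ℝ) ^ ((1 : ℝ) / 2) + (0:ℝ) ^ ((3 : ℝ) / 2)
        + (5 / 2) * x ^ ((3 : ℝ) / 2))) := by
    apply Tendsto.mono_left ?_ nhdsWithin_le_nhds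
    exact (((Real.continuousAt_rpow_const 0 _ (Or.inr (by norm_num))).const_mul 2).add
      (Real.continuousAt_rpow_const 0 _ (Or.inr (by norm_num)))).add continuousAt_const
  have hle := ge_of_tendsto htend hev
  rw [Real.zero_rpow (by norm_num : ((1:ℝ)/2) ≠ 0),
    Real.zero_rpow (by norm_num : ((3:ℝ)/2) ≠ 0)] at hle
  have : (0:ℝ) ≤ x ^ ((3 : ℝ) / 2) := by positivity
  linarith

lemma gfun_neg (t : ℝ) : gfun (-t) = (starRingEnd ℂ) (gfun t) := by
  rcases eq_or_ne t 0 with rfl | ht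
  · simp [gfun_zero]
  · simp only [gfun, abs_neg, map_mul]
    congr 1
    · simp [Complex.conj_ofReal]
    · rw [← Complex.exp_conj]
      congr 1
      simp only [div_eq_mul_inv, map_mul, Complex.conj_I, Complex.conj_inv, Complex.conj_ofReal]
      push_cast
      ring

lemma Ffun_neg (y : ℝ) : Ffun (-y) = -(starRingEnd ℂ) (Ffun y) := by
  have h := intervalIntegral.integral_comp_neg (a := y) (b := 0) gfun
  simp only [neg_zero] at h
  have h2 : ∫ x in y..(0:ℝ), gfun (-x) = (starRingEnd ℂ) (∫ x in y..(0:ℝ), gfun x) := by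
    simp_rw [gfun_neg]
    rw [intervalIntegral, intervalIntegral, map_sub, ← integral_conj, ← integral_conj]
  rw [h2] at h
  rw [Ffun, ← h, intervalIntegral.integral_symm, map_neg, Ffun]

lemma Ffun_bound (x : ℝ) : ‖Ffun x‖ ≤ 3 * |x| ^ ((3 : ℝ) / 2) := by
  rcases lt_trichotomy x 0 with hx | rfl | hx
  · have h1 := Ffun_bound_pos (x := -x) (by linarith)
    have h2 : Ffun x = -(starRingEnd ℂ) (Ffun (-x)) := by
      rw [← neg_neg x, Ffun_neg, neg_neg]
    rw [h2, norm_neg, RCLike.norm_conj, abs_of_neg hx]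
    exact h1
  · simp [Ffun_zero, Real.zero_rpow (by norm_num : ((3:ℝ)/2) ≠ 0)]
  · rw [abs_of_pos hx]; exact Ffun_bound_pos hx

/-- The function `f x = |x|^{-1/2} e^{i/x}` (with `f 0 = 0`) is locally integrable on
`ℝ`, unbounded on every neighborhood of `0`, and has the Łojasiewicz value `0` at `0`:
`∫ f (ε x) φ x dx → 0` as `ε → 0` through nonzero reals, for every test function `φ`. -/
theorem lojasiewicz_value_unbounded_example (f : ℝ → ℂ)
    (hf0 : f 0 = 0)
    (hf : ∀ x : ℝ, x ≠ 0 →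
      f x = (|x| ^ (-(1 : ℝ) / 2) : ℝ) * Complex.exp (Complex.I / (x : ℂ))) :
    LocallyIntegrable f volume ∧
    (∀ V ∈ 𝓝 (0 : ℝ), ∀ M : ℝ, ∃ x ∈ V, M < ‖f x‖) ∧
    (∀ φ : ℝ → ℂ, ContDiff ℝ (⊤ : ℕ∞) φ → HasCompactSupport φ →
      Tendsto (fun ε : ℝ => ∫ x, f (ε * x) * φ x) (𝓝[≠] (0 : ℝ)) (𝓝 0)) := by
  have hfg : f = gfun := by
    funext x
    rcases eq_or_ne x 0 with rfl | hx
    · rw [hf0, gfun_zero]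
    · rw [hf x hx]; rfl
  subst hfg
  refine ⟨gfun_loc, ?_, ?_⟩
  · intro V hV M
    obtain ⟨δ, hδ0, hδV⟩ := Metric.mem_nhds_iff.mp hV
    set t : ℝ := max M 0 + 1 with htdef
    have ht : 0 < t := by positivity
    set x : ℝ := min (δ / 2) (t ^ (-2 : ℝ)) with hxdef
    have hx0 : 0 < x := lt_min (by linarith) (Real.rpow_pos_of_pos ht _)
    refine ⟨x, hδV ?_, ?_⟩
    · rw [Metric.mem_ball, Real.dist_eq, sub_zero, abs_of_pos hx0]
      exact lt_of_le_of_lt (min_le_left _ _) (by linarith)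
    · rw [norm_gfun, abs_of_pos hx0]
      have h1 : (t ^ (-2 : ℝ)) ^ (-(1 : ℝ) / 2) ≤ x ^ (-(1 : ℝ) / 2) :=
        Real.rpow_le_rpow_of_nonpos hx0 (min_le_right _ _) (by norm_num)
      have h2 : (t ^ (-2 : ℝ)) ^ (-(1 : ℝ) / 2) = t := by
        rw [← Real.rpow_mul ht.le]; norm_num
      have h3 : M < t := by
        have := le_max_left M 0
        linarith
      linarith [h2 ▸ h1]
  · intro φ hφ hφc
    obtain ⟨R, hR⟩ := hφc.isBounded.subset_closedBall 0
    set S : ℝ := |R| + 1 with hSdef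
    have hS0 : 0 < S := by positivity
    have hφzero : ∀ x : ℝ, |R| < |x| → φ x = 0 := by
      intro x hx
      apply image_eq_zero_of_notMem_tsupport
      intro hmem
      have h1 := hR hmem
      rw [Real.closedBall_eq_Icc, zero_sub, zero_add, mem_Icc] at h1
      have h2 : |x| ≤ R := abs_le.mpr h1
      have := le_abs_self R
      linarith
    set ψ : ℝ → ℂ := deriv φ with hψdef
    have hφCont : Continuous φ := hφ.continuous
    have hψCont : Continuous ψ := hφ.continuous_deriv (by simp)
    have hφdiff : ∀ x : ℝ, HasDerivAt φ (ψ x) x := fun x =>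
      (hφ.differentiable (by simp) x).hasDerivAt
    obtain ⟨Cψ, hCψ⟩ := hψCont.bounded_above_of_compact_support hφc.deriv
    have hCψ0 : 0 ≤ Cψ := le_trans (norm_nonneg _) (hCψ 0)
    set K : ℝ := 3 * S ^ ((3 : ℝ) / 2) * Cψ * (2 * S) with hKdef
    have key : ∀ ε : ℝ, ε ≠ 0 →
        ‖∫ x, gfun (ε * x) * φ x‖ ≤ K * |ε| ^ ((1 : ℝ) / 2) := by
      intro ε hε
      have hεa : 0 < |ε| := abs_pos.mpr hε
      -- restrict to the interval
      have hzero : ∀ x ∉ Ioc (-S) S, gfun (ε * x) * φ x = 0 := by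
        intro x hx
        have hxa : |R| < |x| := by
          rw [mem_Ioc, not_and_or, not_lt, not_le] at hx
          have hRa := abs_nonneg R
          rcases hx with h | h
          · rw [abs_of_nonpos (show x ≤ 0 by linarith)]; linarith
          · rw [abs_of_pos (show (0:ℝ) < x by linarith)]; linarith
        rw [hφzero x hxa, mul_zero]
      have hred : (∫ x, gfun (ε * x) * φ x)
          = ∫ x in (-S)..S, gfun (ε * x) * φ x := by
        rw [intervalIntegral.integral_of_le (by linarith),
          setIntegral_eq_integral_of_forall_compl_eq_zero hzero]
      -- integration by parts
      set H : ℝ → ℂ := fun x => (ε⁻¹ : ℝ) • Ffun (ε * x) with hHdef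
      have hHcont : Continuous H :=
        (Ffun_cont.comp (continuous_const.mul continuous_id)).fun_const_smul _
      have hHder : ∀ x : ℝ, x ≠ 0 → HasDerivAt H (gfun (ε * x)) x := by
        intro x hx
        have h1 : HasDerivAt (fun x : ℝ => ε * x) ε x := by
          simpa using (hasDerivAt_id x).const_mul ε
        have h2 : HasDerivAt (fun x : ℝ => Ffun (ε * x)) (ε • gfun (ε * x)) x :=
          (Ffun_deriv (mul_ne_zero hε hx)).scomp x h1
        have h3 := h2.const_smul (ε⁻¹ : ℝ)
        rw [smul_smul, inv_mul_cancel₀ hε, one_smul] at h3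
        exact h3
      set u : ℝ → ℂ := fun x => H x * φ x with hudef
      set u' : ℝ → ℂ := fun x => gfun (ε * x) * φ x + H x * ψ x with hu'def
      have hud : ∀ x : ℝ, x ≠ 0 → HasDerivAt u (u' x) x := fun x hx =>
        (hHder x hx).mul (hφdiff x)
      have hgII : IntervalIntegrable (fun x => gfun (ε * x) * φ x) volume (-S) S := by
        have hg2 := (gfun_ii (ε * -S) (ε * S)).comp_mul_left (c := ε)
        rw [mul_div_cancel_left₀ _ hε, mul_div_cancel_left₀ _ hε] at hg2
        exact hg2.mul_continuousOn hφCont.continuousOn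
      have hHψII : IntervalIntegrable (fun x => H x * ψ x) volume (-S) S :=
        (hHcont.mul hψCont).intervalIntegrable _ _
      have hIi : IntervalIntegrable u' volume (-S) S := hgII.add hHψII
      have hFTC : ∫ x in (-S)..S, u' x = u S - u (-S) :=
        MeasureTheory.integral_eq_of_hasDerivAt_off_countable u u'
          (countable_singleton 0) ((hHcont.mul hφCont).continuousOn)
          (fun x hx => hud x hx.2) hIi
      have hubd : u S - u (-S) = 0 := by
        have hS1 : |R| < S := by linarith
        have h1 : φ S = 0 := hφzero S (by rwa [abs_of_pos hS0])
        have h2 : φ (-S) = 0 := hφzero (-S) (by rwa [abs_neg, abs_of_pos hS0])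
        simp [hudef, h1, h2]
      rw [hubd] at hFTC
      rw [hu'def] at hFTC
      rw [intervalIntegral.integral_add hgII hHψII] at hFTC
      have hmain : ∫ x in (-S)..S, gfun (ε * x) * φ x
          = -∫ x in (-S)..S, H x * ψ x := by
        rw [eq_neg_iff_add_eq_zero]; exact hFTC
      -- bound
      have hbd : ‖∫ x in (-S)..S, H x * ψ x‖
          ≤ (3 * |ε| ^ ((1 : ℝ) / 2) * S ^ ((3 : ℝ) / 2) * Cψ) * |S - (-S)| := by
        apply intervalIntegral.norm_integral_le_of_norm_le_const
        intro x hx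
        rw [uIoc_of_le (by linarith : -S ≤ S)] at hx
        have hxS : |x| ≤ S := abs_le.mpr ⟨hx.1.le, hx.2⟩
        have hHx : ‖H x‖ ≤ 3 * |ε| ^ ((1 : ℝ) / 2) * S ^ ((3 : ℝ) / 2) := by
          rw [hHdef]
          simp only [norm_smul, Real.norm_eq_abs, abs_inv]
          have h1 : ‖Ffun (ε * x)‖ ≤ 3 * |ε * x| ^ ((3 : ℝ) / 2) := Ffun_bound _
          have h2 : |ε * x| ^ ((3 : ℝ) / 2) = |ε| ^ ((3 : ℝ) / 2) * |x| ^ ((3 : ℝ) / 2) := by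
            rw [abs_mul, Real.mul_rpow (abs_nonneg _) (abs_nonneg _)]
          have h3 : |ε| ^ ((3 : ℝ) / 2) = |ε| * |ε| ^ ((1 : ℝ) / 2) := by
            nth_rewrite 2 [← Real.rpow_one |ε|]
            rw [← Real.rpow_add hεa]; norm_num
          have h4 : |x| ^ ((3 : ℝ) / 2) ≤ S ^ ((3 : ℝ) / 2) :=
            Real.rpow_le_rpow (abs_nonneg _) hxS (by norm_num)
          calc |ε|⁻¹ * ‖Ffun (ε * x)‖ ≤ |ε|⁻¹ * (3 * (|ε| * |ε| ^ ((1 : ℝ) / 2)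
              * |x| ^ ((3 : ℝ) / 2))) := by
                apply mul_le_mul_of_nonneg_left _ (by positivity)
                rw [← h3, ← h2]; exact h1
            _ = 3 * |ε| ^ ((1 : ℝ) / 2) * |x| ^ ((3 : ℝ) / 2) := by
                field_simp
            _ ≤ 3 * |ε| ^ ((1 : ℝ) / 2) * S ^ ((3 : ℝ) / 2) := by
                apply mul_le_mul_of_nonneg_left h4 (by positivity)
        calc ‖H x * ψ x‖ = ‖H x‖ * ‖ψ x‖ := norm_mul _ _
          _ ≤ (3 * |ε| ^ ((1 : ℝ) / 2) * S ^ ((3 : ℝ) / 2)) * Cψ :=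
            mul_le_mul hHx (hCψ x) (norm_nonneg _) (by positivity)
      have habs : |S - (-S)| = 2 * S := by rw [abs_of_pos (by linarith)]; ring
      rw [hred, hmain, norm_neg]
      calc ‖∫ x in (-S)..S, H x * ψ x‖
          ≤ (3 * |ε| ^ ((1 : ℝ) / 2) * S ^ ((3 : ℝ) / 2) * Cψ) * (2 * S) := by
            rw [← habs]; exact hbd
        _ = K * |ε| ^ ((1 : ℝ) / 2) := by rw [hKdef]; ring
    apply squeeze_zero_norm' ((eventually_mem_nhdsWithin).mono fun ε hε => key ε hε)
    have h1 : Tendsto (fun ε : ℝ => |ε| ^ ((1 : ℝ) / 2)) (𝓝 0) (𝓝 0) := by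
      have h2 : ContinuousAt (fun ε : ℝ => |ε| ^ ((1 : ℝ) / 2)) 0 :=
        (Real.continuousAt_rpow_const _ _ (Or.inr (by norm_num))).comp
          continuous_abs.continuousAt
      have h3 := h2.tendsto
      rwa [abs_zero, Real.zero_rpow (by norm_num : ((1:ℝ)/2) ≠ 0)] at h3
    have h4 : Tendsto (fun ε : ℝ => K * |ε| ^ ((1 : ℝ) / 2)) (𝓝[≠] (0:ℝ)) (𝓝 (K * 0)) :=
      (h1.const_mul K).mono_left nhdsWithin_le_nhds
    rwa [mul_zero] at h4
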